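/- arXiv:1401.3582 — 4 statements merged into one kernel-verified Lean document; each statement's English description precedes it below -/
import Mathlib

section
/- Let q > 0 be a real number, k ≤ n natural numbers, and A_0,…,A_n and B_0,…,B_n real numbers such that Σ_{j=0}^n A_j x^{n-j} y^j = q^{k-n} Σ_{j=0}^n B_j (x+(q-1)y)^{n-j} (x-y)^j as polynomials. Then for every r with 0 ≤ r ≤ n: Σ_{j=0}^n C(n-j, r) A_j = q^{k-r} Σ_{j=0}^n C(n-j, r-j) B_j. -/
open Finset

/-!
Set `x = s + 1`, `y = 1` in the hypothesis: this gives a polynomial identity in `s`,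
`∑ A j (s + 1)^(n-j) = q^(k-n) ∑ B j (s + q)^(n-j) s^j`, and comparing the coefficients of `s^r`
on both sides is the claim (the `r`-th derivative at `s = 0` in the paper's formulation).
-/

namespace Polynomial

variable {R ι : Type*} [CommSemiring R]

theorem coeff_sum_C_mul_X_add_one_pow (s : Finset ι) (a : ι → R) (e : ι → ℕ) (r : ℕ) :
    (∑ j ∈ s, C (a j) * (X + 1) ^ e j).coeff r = ∑ j ∈ s, ((e j).choose r : R) * a j := by
  simp only [finsetSum_coeff, coeff_C_mul, coeff_X_add_one_pow]
  exact sum_congr rfl fun j _ => mul_comm _ _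

theorem coeff_sum_C_mul_X_add_C_pow_mul_X_pow (n : ℕ) (b : ℕ → R) (q : R) (r : ℕ) :
    (∑ j ∈ range (n + 1), C (b j) * (X + C q) ^ (n - j) * X ^ j).coeff r =
      q ^ (n - r) *
        ∑ j ∈ range (n + 1), if j ≤ r then ((n - j).choose (r - j) : R) * b j else 0 := by
  simp only [finsetSum_coeff, coeff_mul_X_pow', coeff_C_mul, coeff_X_add_C_pow, mul_sum]
  refine sum_congr rfl fun j _ => ?_
  split_ifs with hjr
  · rw [Nat.sub_sub, Nat.add_sub_cancel' hjr]
    ring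
  · rw [mul_zero]

end Polynomial

open Polynomial in
theorem mac_to_form4_general (q : ℝ) (hq : 0 < q) (k n : ℕ) (A B : ℕ → ℝ)
    (h : ∀ x y : ℝ,
      ∑ j ∈ Finset.range (n + 1), A j * x ^ (n - j) * y ^ j =
      q ^ ((k : ℤ) - (n : ℤ)) *
        ∑ j ∈ Finset.range (n + 1), B j * (x + (q - 1) * y) ^ (n - j) * (x - y) ^ j) :
    ∀ r ≤ n,
      ∑ j ∈ Finset.range (n + 1), ((n - j).choose r : ℝ) * A j =
      q ^ ((k : ℤ) - (r : ℤ)) *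
        ∑ j ∈ Finset.range (n + 1),
          if j ≤ r then ((n - j).choose (r - j) : ℝ) * B j else 0 := by
  intro r hr
  have hpoly : ∑ j ∈ range (n + 1), C (A j) * (X + 1) ^ (n - j) =
      C (q ^ ((k : ℤ) - (n : ℤ))) *
        ∑ j ∈ range (n + 1), C (B j) * (X + C q) ^ (n - j) * X ^ j := by
    refine Polynomial.funext fun s => ?_
    simpa [eval_finsetSum, show s + 1 + (q - 1) * 1 = s + q by ring] using h (s + 1) 1
  have hcoeff := congrArg (coeff · r) hpoly
  simp only [coeff_C_mul, coeff_sum_C_mul_X_add_one_pow,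
    coeff_sum_C_mul_X_add_C_pow_mul_X_pow] at hcoeff
  rw [hcoeff, ← mul_assoc, ← zpow_natCast, ← zpow_add₀ hq.ne', Nat.cast_sub hr]
  ring_nf

theorem mac_to_form4 (q : ℝ) (hq : 0 < q) (k n : ℕ) (hkn : k ≤ n) (A B : ℕ → ℝ)
    (h : ∀ x y : ℝ,
      ∑ j ∈ Finset.range (n + 1), A j * x ^ (n - j) * y ^ j =
      q ^ ((k : ℤ) - (n : ℤ)) *
        ∑ j ∈ Finset.range (n + 1), B j * (x + (q - 1) * y) ^ (n - j) * (x - y) ^ j) :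
    ∀ r ≤ n,
      ∑ j ∈ Finset.range (n + 1), ((n - j).choose r : ℝ) * A j =
      q ^ ((k : ℤ) - (r : ℤ)) *
        ∑ j ∈ Finset.range (n + 1),
          if j ≤ r then ((n - j).choose (r - j) : ℝ) * B j else 0 :=
  mac_to_form4_general q hq k n A B h
end

section
/- Let q > 0 be a real number, k ≤ n natural numbers, and A_0,…,A_n and B_0,…,B_n real numbers such that Σ_{j=0}^n A_j x^{n-j} y^j = q^{k-n} Σ_{j=0}^n B_j (x+(q-1)y)^{n-j} (x-y)^j as polynomials. Then for all natural numbers t ≤ r ≤ n: Σ_{j=0}^n C(j,t) C(n-j, r-t) A_j = q^{k-r} Σ_{i=0}^t (-1)^i (q-1)^{t-i} Σ_{j=0}^r C(n-j, r-j) C(j, i) C(r-j, t-i) B_j. -/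
/-!
Substitute `x = 1 + σ`, `y = 1 + zσ` in the hypothesis; since `ℝ` is infinite it becomes an
identity of polynomials in `σ` and `z` (below `σ = Y` and `z = C X` in `ℝ[X][Y]`), and the
theorem compares the coefficients of `σ ^ r * z ^ t`. On the left,
`(1 + σ) ^ (n - j) (1 + zσ) ^ j` contributes `C(n - j, r - t) C(j, t)`. On the right,
`x + (q - 1) y = q + (1 + (q - 1) z) σ` and `x - y = (1 - z) σ`, so the `σ ^ r` coefficient of
the `j`-th term vanishes for `j > r` and is
`C(n - j, r - j) q ^ (n - r) (1 - z) ^ j (1 + (q - 1) z) ^ (r - j)` otherwise; its `z ^ t`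
coefficient is the inner sum over `i`.
-/

open Finset Polynomial Polynomial.Bivariate

def weightEnumerator {R : Type*} [CommSemiring R] (A : ℕ → R) (n : ℕ) (x y : R) : R :=
  ∑ j ∈ range (n + 1), A j * x ^ (n - j) * y ^ j

namespace Polynomial

variable {R : Type*}

section CommSemiring

variable [CommSemiring R]

lemma eval_eval_eq_evalEval (p : R[X][Y]) (ρ : R[X]) (s : R) :
    (p.eval ρ).eval s = p.evalEval s (ρ.eval s) := by
  rw [← map_evalRingHom_eval, eval_map, ← coe_evalRingHom, ← eval₂_hom]

lemma coeff_C_mul_X_add_C_pow (a b : R) (m k : ℕ) :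
    ((C a * X + C b) ^ m).coeff k = b ^ (m - k) * m.choose k * a ^ k := by
  have : (C a * X + C b) ^ m = ((X + C b) ^ m).comp (C a * X) := by simp [add_comp]
  rw [this, comp_C_mul_X_coeff, coeff_X_add_C_pow]

lemma coeff_C_mul_X_add_one_pow_mul (a b : R) (p m t : ℕ) :
    ((C a * X + 1) ^ p * (C b * X + 1) ^ m).coeff t =
      ∑ i ∈ range (t + 1), p.choose i * m.choose (t - i) * a ^ i * b ^ (t - i) := by
  rw [← C_1, coeff_mul, Nat.sum_antidiagonal_eq_sum_range_succ_mk]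
  refine sum_congr rfl fun i _ => ?_
  rw [coeff_C_mul_X_add_C_pow, coeff_C_mul_X_add_C_pow]
  simp only [one_pow, one_mul]
  ring

lemma coeff_C_mul_X_add_C_pow_mul_C_mul_X_pow (a b c : R) (m j r : ℕ) :
    ((C a * X + C b) ^ m * (C c * X) ^ j).coeff r =
      if j ≤ r then b ^ (m - (r - j)) * m.choose (r - j) * a ^ (r - j) * c ^ j else 0 := by
  rw [mul_pow, ← C_pow, ← mul_assoc, coeff_mul_X_pow', coeff_mul_C, coeff_C_mul_X_add_C_pow]

lemma coeff_coeff_X_add_one_pow_mul_C_X_mul_X_add_one_pow (m j : ℕ) {r t : ℕ} (htr : t ≤ r) :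
    ((((Y + 1) ^ m * (C X * Y + 1) ^ j : R[X][Y]).coeff r).coeff t) =
      m.choose (r - t) * j.choose t := by
  rw [show (Y + 1 : R[X][Y]) = C 1 * Y + 1 by simp, coeff_C_mul_X_add_one_pow_mul,
    finsetSum_coeff, sum_eq_single (r - t)]
  · simp [Nat.sub_sub_self htr, ← Nat.cast_mul]
  · intro i hi hne
    have : t ≠ r - i := by rw [mem_range] at hi; omega
    simp [← Nat.cast_mul, coeff_X_pow, this]
  · simp

end CommSemiring

section CommRing

variable [CommRing R]

lemma eq_of_forall_evalEval_eq [IsDomain R] [Infinite R] {p q : R[X][Y]}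
    (h : ∀ x y, p.evalEval x y = q.evalEval x y) : p = q :=
  Polynomial.funext fun ρ => Polynomial.funext fun s => by
    rw [eval_eval_eq_evalEval, eval_eval_eq_evalEval, h]

lemma coeff_coeff_macWilliams_pow_mul_pow (q : R) (m j r t : ℕ) :
    (((Y + 1 + CC (q - 1) * (C X * Y + 1)) ^ m * (Y + 1 - (C X * Y + 1)) ^ j :
      R[X][Y]).coeff r).coeff t =
      if j ≤ r then q ^ (m - (r - j)) * m.choose (r - j) *
        ∑ i ∈ range (t + 1), (-1) ^ i * (q - 1) ^ (t - i) * j.choose i * (r - j).choose (t - i)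
      else 0 := by
  rw [show Y + 1 + CC (q - 1) * (C X * Y + 1) = C (C (q - 1) * X + 1) * Y + C (C q) by
      simp only [CC, map_add, map_mul, map_sub, map_one]; ring,
    show (Y + 1 - (C X * Y + 1) : R[X][Y]) = C (C (-1) * X + 1) * Y by
      simp only [map_add, map_mul, map_neg, map_one]; ring,
    coeff_C_mul_X_add_C_pow_mul_C_mul_X_pow]
  split_ifs with hjr
  · rw [← C_pow, ← map_natCast C, ← map_mul, mul_assoc, mul_comm (_ ^ (r - j)), coeff_C_mul,
      coeff_C_mul_X_add_one_pow_mul]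
    congr 1
    refine sum_congr rfl fun i _ => ?_
    ring
  · simp

end CommRing

end Polynomial

section WeightEnumerator

variable {R : Type*}

lemma coeff_coeff_weightEnumerator_CC [CommSemiring R] (A : ℕ → R) (n : ℕ) (x y : R[X][Y]) (r t : ℕ) :
    ((weightEnumerator (fun j => CC (A j)) n x y).coeff r).coeff t =
      ∑ j ∈ range (n + 1), A j * ((x ^ (n - j) * y ^ j).coeff r).coeff t := by
  simp only [weightEnumerator, finsetSum_coeff, mul_assoc, coeff_C_mul]

lemma coeff_coeff_weightEnumerator_shift [CommSemiring R] (A : ℕ → R) (n : ℕ) {r t : ℕ} (htr : t ≤ r) :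
    ((weightEnumerator (fun j => CC (A j)) n (Y + 1) (C X * Y + 1)).coeff r).coeff t =
      ∑ j ∈ range (n + 1), (j.choose t : R) * (n - j).choose (r - t) * A j := by
  rw [coeff_coeff_weightEnumerator_CC]
  refine sum_congr rfl fun j _ => ?_
  rw [coeff_coeff_X_add_one_pow_mul_C_X_mul_X_add_one_pow _ _ htr]
  ring

lemma coeff_coeff_weightEnumerator_macWilliams [CommRing R] (B : ℕ → R) (q : R) {n r : ℕ}
    (hrn : r ≤ n) (t : ℕ) :
    ((weightEnumerator (fun j => CC (B j)) n
        (Y + 1 + CC (q - 1) * (C X * Y + 1)) (Y + 1 - (C X * Y + 1))).coeff r).coeff t =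
      q ^ (n - r) * ∑ i ∈ range (t + 1), (-1) ^ i * (q - 1) ^ (t - i) *
        ∑ j ∈ range (r + 1),
          ((n - j).choose (r - j) : R) * j.choose i * (r - j).choose (t - i) * B j := by
  have hrange : (range (n + 1)).filter (· ≤ r) = range (r + 1) := by
    ext j; simp only [mem_filter, mem_range]; omega
  rw [coeff_coeff_weightEnumerator_CC]
  simp only [coeff_coeff_macWilliams_pow_mul_pow, mul_ite, mul_zero]
  rw [← sum_filter, hrange]
  simp_rw [mul_sum]
  rw [sum_comm]
  refine sum_congr rfl fun i _ => sum_congr rfl fun j hj => ?_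
  rw [show n - j - (r - j) = n - r by rw [mem_range] at hj; omega]
  ring

end WeightEnumerator

theorem mac_to_form5_general (q : ℝ) (hq : 0 < q) (k n : ℕ) (A B : ℕ → ℝ)
    (h : ∀ x y : ℝ,
      ∑ j ∈ Finset.range (n + 1), A j * x ^ (n - j) * y ^ j =
      q ^ ((k : ℤ) - (n : ℤ)) *
        ∑ j ∈ Finset.range (n + 1), B j * (x + (q - 1) * y) ^ (n - j) * (x - y) ^ j) :
    ∀ t r : ℕ, t ≤ r → r ≤ n →
      ∑ j ∈ Finset.range (n + 1), (j.choose t : ℝ) * ((n - j).choose (r - t) : ℝ) * A j =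
      q ^ ((k : ℤ) - (r : ℤ)) *
        ∑ i ∈ Finset.range (t + 1),
          (-1 : ℝ) ^ i * (q - 1) ^ (t - i) *
            ∑ j ∈ Finset.range (r + 1),
              ((n - j).choose (r - j) : ℝ) * (j.choose i : ℝ) * ((r - j).choose (t - i) : ℝ) * B j := by
  intro t r htr hrn
  have hpoly : weightEnumerator (fun j => CC (A j)) n (Y + 1) (C X * Y + 1) =
      CC (q ^ ((k : ℤ) - n)) * weightEnumerator (fun j => CC (B j)) n
        (Y + 1 + CC (q - 1) * (C X * Y + 1)) (Y + 1 - (C X * Y + 1)) :=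
    eq_of_forall_evalEval_eq fun z s => by
      simpa [weightEnumerator, evalEval_finsetSum, evalEval_C] using h (s + 1) (z * s + 1)
  have hcoeff := congrArg (fun p => (p.coeff r).coeff t) hpoly
  simp only [coeff_C_mul, coeff_coeff_weightEnumerator_shift _ _ htr,
    coeff_coeff_weightEnumerator_macWilliams _ _ hrn] at hcoeff
  rw [hcoeff, ← mul_assoc, ← zpow_natCast, ← zpow_add₀ hq.ne', Nat.cast_sub hrn]
  ring_nf

theorem mac_to_form5 (q : ℝ) (hq : 0 < q) (k n : ℕ) (hkn : k ≤ n) (A B : ℕ → ℝ)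
    (h : ∀ x y : ℝ,
      ∑ j ∈ Finset.range (n + 1), A j * x ^ (n - j) * y ^ j =
      q ^ ((k : ℤ) - (n : ℤ)) *
        ∑ j ∈ Finset.range (n + 1), B j * (x + (q - 1) * y) ^ (n - j) * (x - y) ^ j) :
    ∀ t r : ℕ, t ≤ r → r ≤ n →
      ∑ j ∈ Finset.range (n + 1), (j.choose t : ℝ) * ((n - j).choose (r - t) : ℝ) * A j =
      q ^ ((k : ℤ) - (r : ℤ)) *
        ∑ i ∈ Finset.range (t + 1),
          (-1 : ℝ) ^ i * (q - 1) ^ (t - i) *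
            ∑ j ∈ Finset.range (r + 1),
              ((n - j).choose (r - j) : ℝ) * (j.choose i : ℝ) * ((r - j).choose (t - i) : ℝ) * B j :=
  mac_to_form5_general q hq k n A B h
end

section
/- Let q > 0 be a real number, k ≤ n natural numbers, and A_0,…,A_n and B_0,…,B_n real numbers. The following are equivalent: (a) Σ_{j=0}^n A_j x^{n-j} y^j = q^{k-n} Σ_{j=0}^n B_j (x+(q-1)y)^{n-j} (x-y)^j as polynomials; (b) for all 0 ≤ r ≤ n, Σ_{j=0}^n C(n-j, r) A_j = q^{k-r} Σ_{j=0}^n C(n-j, r-j) B_j. -/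
/-!
Write `u = x - y`. Expanding `x ^ (n - j) = (u + y) ^ (n - j)` and
`(x + (q - 1) y) ^ (n - j) = (u + q y) ^ (n - j)` binomially turns both sides of (a) into binary
forms `∑ c_r u ^ r y ^ (n - r)`, whose coefficients are the two sides of (b). Since
`(x, y) ↦ (x - y, y)` is bijective and a binary form over an infinite domain determines its
coefficients, (a) and (b) are equivalent.
-/

open Finset

section Expansion

variable {R : Type*} [CommSemiring R]

theorem add_pow_sub_mul_pow_eq_sum {n j : ℕ} (hj : j ≤ n) (u v : R) :
    (u + v) ^ (n - j) * v ^ j =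
      ∑ r ∈ range (n + 1), ((n - j).choose r : R) * u ^ r * v ^ (n - r) := by
  rw [add_pow, sum_mul]
  calc _ = ∑ r ∈ range (n - j + 1), ((n - j).choose r : R) * u ^ r * v ^ (n - r) :=
        sum_congr rfl fun r hr => by
          rw [show n - r = n - j - r + j by have := mem_range.mp hr; omega, pow_add]
          ring
    _ = _ := sum_subset (range_subset_range.2 (by omega)) fun r _ hr => by
        rw [Nat.choose_eq_zero_of_lt (by simpa using hr), Nat.cast_zero, zero_mul, zero_mul]

theorem add_pow_sub_mul_pow_eq_sum_ite {n j : ℕ} (hj : j ≤ n) (u w : R) :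
    (u + w) ^ (n - j) * u ^ j =
      ∑ r ∈ range (n + 1),
        (if j ≤ r then ((n - j).choose (r - j) : R) else 0) * u ^ r * w ^ (n - r) := by
  rw [add_comm, add_pow_sub_mul_pow_eq_sum hj, ← sum_range_reflect]
  refine sum_congr rfl fun r hr => ?_
  have hr : r ≤ n := Nat.lt_succ_iff.mp (mem_range.mp hr)
  rw [Nat.add_sub_cancel, Nat.sub_sub_self hr]
  split_ifs with hjr
  · rw [Nat.choose_symm_of_eq_add (by omega : n - j = n - r + (r - j))]
    ring
  · rw [Nat.choose_eq_zero_of_lt (by omega), Nat.cast_zero, zero_mul, zero_mul, zero_mul]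

theorem sum_mul_add_pow_mul_pow (n : ℕ) (A : ℕ → R) (u v : R) :
    ∑ j ∈ range (n + 1), A j * (u + v) ^ (n - j) * v ^ j =
      ∑ r ∈ range (n + 1),
        (∑ j ∈ range (n + 1), ((n - j).choose r : R) * A j) * u ^ r * v ^ (n - r) := by
  calc _ = ∑ j ∈ range (n + 1), ∑ r ∈ range (n + 1),
          ((n - j).choose r : R) * A j * u ^ r * v ^ (n - r) := by
        refine sum_congr rfl fun j hj => ?_
        rw [mul_assoc, add_pow_sub_mul_pow_eq_sum (Nat.lt_succ_iff.mp (mem_range.mp hj)), mul_sum]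
        exact sum_congr rfl fun r _ => by ring
    _ = _ := by
        rw [sum_comm]
        simp_rw [sum_mul]

theorem sum_mul_add_pow_mul_pow_ite (n : ℕ) (B : ℕ → R) (u w : R) :
    ∑ j ∈ range (n + 1), B j * (u + w) ^ (n - j) * u ^ j =
      ∑ r ∈ range (n + 1),
        (∑ j ∈ range (n + 1), if j ≤ r then ((n - j).choose (r - j) : R) * B j else 0) *
          u ^ r * w ^ (n - r) := by
  calc _ = ∑ j ∈ range (n + 1), ∑ r ∈ range (n + 1),
          (if j ≤ r then ((n - j).choose (r - j) : R) * B j else 0) * u ^ r * w ^ (n - r) := by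
        refine sum_congr rfl fun j hj => ?_
        rw [mul_assoc, add_pow_sub_mul_pow_eq_sum_ite (Nat.lt_succ_iff.mp (mem_range.mp hj)),
          mul_sum]
        refine sum_congr rfl fun r _ => ?_
        split_ifs <;> ring
    _ = _ := by
        rw [sum_comm]
        simp_rw [sum_mul]

end Expansion

theorem forall_sum_mul_pow_mul_pow_eq_iff {R : Type*} [CommRing R] [IsDomain R] [Infinite R]
    (n : ℕ) (a b : ℕ → R) :
    (∀ u v : R, ∑ r ∈ range (n + 1), a r * u ^ r * v ^ (n - r) =
        ∑ r ∈ range (n + 1), b r * u ^ r * v ^ (n - r)) ↔ ∀ r ≤ n, a r = b r := by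
  refine ⟨fun h r hr => ?_, fun h u v => sum_congr rfl fun r hr => by
    rw [h r (Nat.lt_succ_iff.mp (mem_range.mp hr))]⟩
  have hpoly : ∑ i ∈ range (n + 1), Polynomial.C (a i) * Polynomial.X ^ i =
      ∑ i ∈ range (n + 1), Polynomial.C (b i) * Polynomial.X ^ i :=
    Polynomial.funext fun s => by simpa [Polynomial.eval_finsetSum] using h s 1
  simpa [Polynomial.finsetSum_coeff, Polynomial.coeff_C_mul, Polynomial.coeff_X_pow,
    Nat.lt_succ_iff.mpr hr] using congrArg (Polynomial.coeff · r) hpoly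

theorem mac_iff_form4_general (q : ℝ) (hq : 0 < q) (k n : ℕ) (A B : ℕ → ℝ) :
    (∀ x y : ℝ,
      ∑ j ∈ Finset.range (n + 1), A j * x ^ (n - j) * y ^ j =
      q ^ ((k : ℤ) - (n : ℤ)) *
        ∑ j ∈ Finset.range (n + 1), B j * (x + (q - 1) * y) ^ (n - j) * (x - y) ^ j) ↔
    (∀ r ≤ n,
      ∑ j ∈ Finset.range (n + 1), ((n - j).choose r : ℝ) * A j =
      q ^ ((k : ℤ) - (r : ℤ)) *
        ∑ j ∈ Finset.range (n + 1),
          if j ≤ r then ((n - j).choose (r - j) : ℝ) * B j else 0) := by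
  have hzpow : ∀ r ≤ n, q ^ ((k : ℤ) - n) * q ^ (n - r) = q ^ ((k : ℤ) - r) := fun r hr => by
    rw [← zpow_natCast, ← zpow_add₀ hq.ne', Nat.cast_sub hr]
    ring_nf
  have expand_rhs : ∀ u v : ℝ,
      q ^ ((k : ℤ) - n) * ∑ j ∈ range (n + 1), B j * (u + q * v) ^ (n - j) * u ^ j =
        ∑ r ∈ range (n + 1), (q ^ ((k : ℤ) - r) *
          ∑ j ∈ range (n + 1), if j ≤ r then ((n - j).choose (r - j) : ℝ) * B j else 0) *
            u ^ r * v ^ (n - r) := fun u v => by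
    rw [sum_mul_add_pow_mul_pow_ite, mul_sum]
    refine sum_congr rfl fun r hr => ?_
    rw [mul_pow, ← hzpow r (Nat.lt_succ_iff.mp (mem_range.mp hr))]
    ring
  refine Iff.trans ?_ (forall_sum_mul_pow_mul_pow_eq_iff n _ _)
  constructor
  · intro h u v
    have hx : u + v + (q - 1) * v = u + q * v := by ring
    simpa [hx, sum_mul_add_pow_mul_pow, expand_rhs] using h (u + v) v
  · intro h x y
    rw [show x + (q - 1) * y = (x - y) + q * y by ring, expand_rhs, ← h,
      ← sum_mul_add_pow_mul_pow, sub_add_cancel]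

theorem mac_iff_form4 (q : ℝ) (hq : 0 < q) (k n : ℕ) (hkn : k ≤ n) (A B : ℕ → ℝ) :
    (∀ x y : ℝ,
      ∑ j ∈ Finset.range (n + 1), A j * x ^ (n - j) * y ^ j =
      q ^ ((k : ℤ) - (n : ℤ)) *
        ∑ j ∈ Finset.range (n + 1), B j * (x + (q - 1) * y) ^ (n - j) * (x - y) ^ j) ↔
    (∀ r ≤ n,
      ∑ j ∈ Finset.range (n + 1), ((n - j).choose r : ℝ) * A j =
      q ^ ((k : ℤ) - (r : ℤ)) *
        ∑ j ∈ Finset.range (n + 1),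
          if j ≤ r then ((n - j).choose (r - j) : ℝ) * B j else 0) :=
  mac_iff_form4_general q hq k n A B
end

section
/- Let q > 0 be a real number, k ≤ n natural numbers, and A_0,…,A_n and B_0,…,B_n real numbers such that for all t ≤ r ≤ n: Σ_{j=0}^n C(j,t) C(n-j, r-t) A_j = q^{k-r} Σ_{i=0}^t (-1)^i (q-1)^{t-i} Σ_{j=0}^r C(n-j, r-j) C(j, i) C(r-j, t-i) B_j. Then Σ_{j=0}^n A_j x^{n-j} y^j = q^{k-n} Σ_{j=0}^n B_j (x+(q-1)y)^{n-j} (x-y)^j as polynomials. -/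
/-!
Write `a = x - y`. Since `x = a + y` and `x + (q - 1) y = a + q y`, both sides expand by the
binomial theorem in the basis `a ^ s * y ^ (n - s)`, `s ≤ n`. The coefficient on the left is
`∑ j, C(n - j, s) A j` and on the right `q ^ (k - s) ∑ j ≤ s, C(n - j, s - j) B j`, and these
agree by the case `t = 0`, `r = s` of the hypothesis.
-/

open Finset

section BinomialBasis

variable {R : Type*} [CommSemiring R]

theorem add_pow_sub_mul_pow_right_eq_sum (a b : R) {j n : ℕ} (hj : j ≤ n) :
    (a + b) ^ (n - j) * b ^ j =
      ∑ s ∈ range (n + 1), ((n - j).choose s : R) * a ^ s * b ^ (n - s) := by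
  rw [add_pow, sum_mul, ← sum_subset (range_subset_range.mpr (by omega : n - j + 1 ≤ n + 1))]
  · refine sum_congr rfl fun s hs => ?_
    have hs : s ≤ n - j := Nat.lt_succ_iff.mp (mem_range.mp hs)
    rw [show n - s = n - j - s + j by omega, pow_add]
    ring
  · intro s hs hs'
    rw [Nat.choose_eq_zero_of_lt (by simp only [mem_range] at hs hs'; omega)]
    simp

theorem add_pow_sub_mul_pow_left_eq_sum (a b : R) {j n : ℕ} (hj : j ≤ n) :
    (a + b) ^ (n - j) * a ^ j =
      ∑ s ∈ Ico j (n + 1), ((n - j).choose (s - j) : R) * a ^ s * b ^ (n - s) := by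
  rw [add_pow, sum_mul, sum_Ico_eq_sum_range, show n + 1 - j = n - j + 1 by omega]
  refine sum_congr rfl fun m hm => ?_
  have hm : m ≤ n - j := Nat.lt_succ_iff.mp (mem_range.mp hm)
  rw [Nat.add_sub_cancel_left, show n - (j + m) = n - j - m by omega, pow_add]
  ring

theorem sum_mul_add_pow_mul_pow_right (f : ℕ → R) (a b : R) (n : ℕ) :
    ∑ j ∈ range (n + 1), f j * (a + b) ^ (n - j) * b ^ j =
      ∑ s ∈ range (n + 1),
        (∑ j ∈ range (n + 1), ((n - j).choose s : R) * f j) * a ^ s * b ^ (n - s) := by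
  calc ∑ j ∈ range (n + 1), f j * (a + b) ^ (n - j) * b ^ j
      = ∑ j ∈ range (n + 1), ∑ s ∈ range (n + 1),
          ((n - j).choose s : R) * f j * a ^ s * b ^ (n - s) := by
        refine sum_congr rfl fun j hj => ?_
        rw [mul_assoc, add_pow_sub_mul_pow_right_eq_sum a b (Nat.lt_succ_iff.mp (mem_range.mp hj)),
          mul_sum]
        exact sum_congr rfl fun s _ => by ring
    _ = _ := by
        rw [sum_comm]
        simp only [sum_mul]

theorem sum_mul_add_pow_mul_pow_left (g : ℕ → R) (a b : R) (n : ℕ) :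
    ∑ j ∈ range (n + 1), g j * (a + b) ^ (n - j) * a ^ j =
      ∑ s ∈ range (n + 1),
        (∑ j ∈ range (s + 1), ((n - j).choose (s - j) : R) * g j) * a ^ s * b ^ (n - s) := by
  calc ∑ j ∈ range (n + 1), g j * (a + b) ^ (n - j) * a ^ j
      = ∑ j ∈ range (n + 1), ∑ s ∈ Ico j (n + 1),
          ((n - j).choose (s - j) : R) * g j * a ^ s * b ^ (n - s) := by
        refine sum_congr rfl fun j hj => ?_
        rw [mul_assoc, add_pow_sub_mul_pow_left_eq_sum a b (Nat.lt_succ_iff.mp (mem_range.mp hj)),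
          mul_sum]
        exact sum_congr rfl fun s _ => by ring
    _ = _ := by
        rw [sum_comm' (t' := range (n + 1)) (s' := fun s => range (s + 1))]
        · simp only [sum_mul]
        · intro j s
          simp only [mem_range, mem_Ico]
          omega

end BinomialBasis

theorem zpow_sub_natCast_mul_pow {G₀ : Type*} [GroupWithZero G₀] {q : G₀} (hq : q ≠ 0) (k : ℤ)
    {s n : ℕ} (hs : s ≤ n) :
    q ^ (k - n) * q ^ (n - s) = q ^ (k - s) := by
  rw [← zpow_natCast, ← zpow_add₀ hq, Nat.cast_sub hs]
  ring_nf

theorem form5_to_mac_general (q : ℝ) (hq : 0 < q) (k n : ℕ) (A B : ℕ → ℝ)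
    (h : ∀ t r : ℕ, t ≤ r → r ≤ n →
      ∑ j ∈ Finset.range (n + 1), (j.choose t : ℝ) * ((n - j).choose (r - t) : ℝ) * A j =
      q ^ ((k : ℤ) - (r : ℤ)) *
        ∑ i ∈ Finset.range (t + 1),
          (-1 : ℝ) ^ i * (q - 1) ^ (t - i) *
            ∑ j ∈ Finset.range (r + 1),
              ((n - j).choose (r - j) : ℝ) * (j.choose i : ℝ) * ((r - j).choose (t - i) : ℝ) * B j) :
    ∀ x y : ℝ,
      ∑ j ∈ Finset.range (n + 1), A j * x ^ (n - j) * y ^ j =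
      q ^ ((k : ℤ) - (n : ℤ)) *
        ∑ j ∈ Finset.range (n + 1), B j * (x + (q - 1) * y) ^ (n - j) * (x - y) ^ j := by
  intro x y
  have coeff : ∀ s ≤ n, ∑ j ∈ range (n + 1), ((n - j).choose s : ℝ) * A j =
      q ^ ((k : ℤ) - s) * ∑ j ∈ range (s + 1), ((n - j).choose (s - j) : ℝ) * B j := by
    intro s hs
    simpa using h 0 s s.zero_le hs
  have lhs := sum_mul_add_pow_mul_pow_right A (x - y) y n
  have rhs := sum_mul_add_pow_mul_pow_left B (x - y) (q * y) n
  rw [sub_add_cancel] at lhs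
  rw [show x - y + q * y = x + (q - 1) * y by ring] at rhs
  rw [lhs, rhs, mul_sum]
  refine sum_congr rfl fun s hs => ?_
  have hs : s ≤ n := Nat.lt_succ_iff.mp (mem_range.mp hs)
  rw [coeff s hs, mul_pow, ← zpow_sub_natCast_mul_pow hq.ne' k hs]
  ring

theorem form5_to_mac (q : ℝ) (hq : 0 < q) (k n : ℕ) (hkn : k ≤ n) (A B : ℕ → ℝ)
    (h : ∀ t r : ℕ, t ≤ r → r ≤ n →
      ∑ j ∈ Finset.range (n + 1), (j.choose t : ℝ) * ((n - j).choose (r - t) : ℝ) * A j =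
      q ^ ((k : ℤ) - (r : ℤ)) *
        ∑ i ∈ Finset.range (t + 1),
          (-1 : ℝ) ^ i * (q - 1) ^ (t - i) *
            ∑ j ∈ Finset.range (r + 1),
              ((n - j).choose (r - j) : ℝ) * (j.choose i : ℝ) * ((r - j).choose (t - i) : ℝ) * B j) :
    ∀ x y : ℝ,
      ∑ j ∈ Finset.range (n + 1), A j * x ^ (n - j) * y ^ j =
      q ^ ((k : ℤ) - (n : ℤ)) *
        ∑ j ∈ Finset.range (n + 1), B j * (x + (q - 1) * y) ^ (n - j) * (x - y) ^ j :=
  form5_to_mac_general q hq k n A B h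
end
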